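/- With h and T as in the context, assume b ≠ 0. Then there exist ε > 0 and a smooth function v : ℝ² → ℝ defined on the ball of radius ε about (0,0), with v(0,0) = 0, such that T(u, v(u,p), p) = 0 for all (u,p) in that ball, and v satisfies the asymptotic expansion v(u,p) = −(B/(2b))·u² + ((a − b)/b)·u·p + o(u² + p²) as (u,p) → (0,0). -/

import Mathlib

open Asymptotics Filter Topology

noncomputable section

/-- The Monge chart `h` at an umbilic point (coefficient of `u²v` normalized to 0). -/
def hFun (k a b c A B C D E u v : ℝ) : ℝ :=
  k / 2 * (u ^ 2 + v ^ 2) + a / 6 * u ^ 3 + b / 2 * u * v ^ 2 + c / 6 * v ^ 3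
    + A / 24 * u ^ 4 + B / 6 * u ^ 3 * v + C / 4 * u ^ 2 * v ^ 2
    + D / 6 * u * v ^ 3 + E / 24 * v ^ 4

/-- Partial derivative `h_u`. -/
def h_u (k a b c A B C D E u v : ℝ) : ℝ := deriv (fun x => hFun k a b c A B C D E x v) u

/-- Partial derivative `h_v`. -/
def h_v (k a b c A B C D E u v : ℝ) : ℝ := deriv (fun y => hFun k a b c A B C D E u y) v

/-- Partial derivative `h_uu`. -/
def h_uu (k a b c A B C D E u v : ℝ) : ℝ := deriv (fun x => h_u k a b c A B C D E x v) u

/-- Partial derivative `h_uv`. -/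
def h_uv (k a b c A B C D E u v : ℝ) : ℝ := deriv (fun y => h_u k a b c A B C D E u y) v

/-- Partial derivative `h_vv`. -/
def h_vv (k a b c A B C D E u v : ℝ) : ℝ := deriv (fun y => h_v k a b c A B C D E u y) v

/-- Coefficient `L = h_u h_v h_vv − (1+h_v²) h_uv` of the principal-line equation. -/
def eqL (k a b c A B C D E u v : ℝ) : ℝ :=
  h_u k a b c A B C D E u v * h_v k a b c A B C D E u v * h_vv k a b c A B C D E u v
    - (1 + h_v k a b c A B C D E u v ^ 2) * h_uv k a b c A B C D E u v

/-- Coefficient `M = (1+h_u²) h_vv − (1+h_v²) h_uu` of the principal-line equation. -/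
def eqM (k a b c A B C D E u v : ℝ) : ℝ :=
  (1 + h_u k a b c A B C D E u v ^ 2) * h_vv k a b c A B C D E u v
    - (1 + h_v k a b c A B C D E u v ^ 2) * h_uu k a b c A B C D E u v

/-- Coefficient `N = (1+h_u²) h_uv − h_u h_v h_uu` of the principal-line equation. -/
def eqN (k a b c A B C D E u v : ℝ) : ℝ :=
  (1 + h_u k a b c A B C D E u v ^ 2) * h_uv k a b c A B C D E u v
    - h_u k a b c A B C D E u v * h_v k a b c A B C D E u v * h_uu k a b c A B C D E u v

/-- `T(u,v,p) = L p² + M p + N`, the lifted principal-line equation. -/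
def eqT (k a b c A B C D E u v p : ℝ) : ℝ :=
  eqL k a b c A B C D E u v * p ^ 2 + eqM k a b c A B C D E u v * p + eqN k a b c A B C D E u v

/-- Partial derivative `T_u`. -/
def eqT_u (k a b c A B C D E u v p : ℝ) : ℝ := deriv (fun x => eqT k a b c A B C D E x v p) u

/-- Partial derivative `T_v`. -/
def eqT_v (k a b c A B C D E u v p : ℝ) : ℝ := deriv (fun y => eqT k a b c A B C D E u y p) v

/-- Partial derivative `T_p`. -/
def eqT_p (k a b c A B C D E u v p : ℝ) : ℝ := deriv (fun q => eqT k a b c A B C D E u v q) p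

/-- The Lie–Cartan vector field `X(u,v,p) = (T_p, p T_p, −(T_u + p T_v))` on `ℝ³ = ℝ×ℝ×ℝ`. -/
def lieCartan (k a b c A B C D E : ℝ) (w : ℝ × ℝ × ℝ) : ℝ × ℝ × ℝ :=
  (eqT_p k a b c A B C D E w.1 w.2.1 w.2.2,
   w.2.2 * eqT_p k a b c A B C D E w.1 w.2.1 w.2.2,
   -(eqT_u k a b c A B C D E w.1 w.2.1 w.2.2 + w.2.2 * eqT_v k a b c A B C D E w.1 w.2.1 w.2.2))

/-- The Lie–Cartan vector field, as a map `(Fin 3 → ℝ) → (Fin 3 → ℝ)`. -/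
def lieCartan3 (k a b c A B C D E : ℝ) (w : Fin 3 → ℝ) : Fin 3 → ℝ :=
  ![eqT_p k a b c A B C D E (w 0) (w 1) (w 2),
    w 2 * eqT_p k a b c A B C D E (w 0) (w 1) (w 2),
    -(eqT_u k a b c A B C D E (w 0) (w 1) (w 2)
        + w 2 * eqT_v k a b c A B C D E (w 0) (w 1) (w 2))]

theorem polyDeriv (c0 c1 c2 c3 c4 x : ℝ) :
    HasDerivAt (fun x : ℝ => c0 + c1*x + c2*x^2 + c3*x^3 + c4*x^4)
      (c1 + 2*c2*x + 3*c3*x^2 + 4*c4*x^3) x := by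
  have h := (((hasDerivAt_const x c0).add ((hasDerivAt_id' x).const_mul c1)).add
      ((hasDerivAt_pow 2 x).const_mul c2)).add
      (((hasDerivAt_pow 3 x).const_mul c3).add ((hasDerivAt_pow 4 x).const_mul c4))
  have e : (fun x : ℝ => c0 + c1*x + c2*x^2 + c3*x^3 + c4*x^4)
      = (fun x : ℝ => c0 + c1 * x + c2 * x ^ 2 + (c3 * x ^ 3 + c4 * x ^ 4)) := by
    funext y; ring
  rw [e]
  refine h.congr_deriv ?_
  push_cast
  ring

theorem h_u_eq (k a b c A B C D E u v : ℝ) :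
    h_u k a b c A B C D E u v
      = k*u + a/2*u^2 + b/2*v^2 + A/6*u^3 + B/2*u^2*v + C/2*u*v^2 + D/6*v^3 := by
  unfold h_u
  have e : (fun x => hFun k a b c A B C D E x v)
      = (fun x : ℝ => (k/2*v^2 + c/6*v^3 + E/24*v^4) + (b/2*v^2 + D/6*v^3)*x
          + (k/2 + C/4*v^2)*x^2 + (a/6 + B/6*v)*x^3 + (A/24)*x^4) := by
    funext x; unfold hFun; ring
  rw [e, (polyDeriv _ _ _ _ _ u).deriv]
  ring

theorem h_v_eq (k a b c A B C D E u v : ℝ) :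
    h_v k a b c A B C D E u v
      = k*v + b*u*v + c/2*v^2 + B/6*u^3 + C/2*u^2*v + D/2*u*v^2 + E/6*v^3 := by
  unfold h_v
  have e : (fun y => hFun k a b c A B C D E u y)
      = (fun y : ℝ => (k/2*u^2 + a/6*u^3 + A/24*u^4) + (B/6*u^3)*y
          + (k/2 + b/2*u + C/4*u^2)*y^2 + (c/6 + D/6*u)*y^3 + (E/24)*y^4) := by
    funext y; unfold hFun; ring
  rw [e, (polyDeriv _ _ _ _ _ v).deriv]
  ring

theorem h_uu_eq (k a b c A B C D E u v : ℝ) :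
    h_uu k a b c A B C D E u v = k + a*u + A/2*u^2 + B*u*v + C/2*v^2 := by
  unfold h_uu
  have e : (fun x => h_u k a b c A B C D E x v)
      = (fun x : ℝ => (b/2*v^2 + D/6*v^3) + (k + C/2*v^2)*x
          + (a/2 + B/2*v)*x^2 + (A/6)*x^3 + (0:ℝ)*x^4) := by
    funext x; rw [h_u_eq]; ring
  rw [e, (polyDeriv _ _ _ _ _ u).deriv]
  ring

theorem h_uv_eq (k a b c A B C D E u v : ℝ) :
    h_uv k a b c A B C D E u v = b*v + B/2*u^2 + C*u*v + D/2*v^2 := by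
  unfold h_uv
  have e : (fun y => h_u k a b c A B C D E u y)
      = (fun y : ℝ => (k*u + a/2*u^2 + A/6*u^3) + (B/2*u^2)*y
          + (b/2 + C/2*u)*y^2 + (D/6)*y^3 + (0:ℝ)*y^4) := by
    funext y; rw [h_u_eq]; ring
  rw [e, (polyDeriv _ _ _ _ _ v).deriv]
  ring

theorem h_vv_eq (k a b c A B C D E u v : ℝ) :
    h_vv k a b c A B C D E u v = k + b*u + c*v + C/2*u^2 + D*u*v + E/2*v^2 := by
  unfold h_vv
  have e : (fun y => h_v k a b c A B C D E u y)
      = (fun y : ℝ => (B/6*u^3) + (k + b*u + C/2*u^2)*y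
          + (c/2 + D/2*u)*y^2 + (E/6)*y^3 + (0:ℝ)*y^4) := by
    funext y; rw [h_v_eq]; ring
  rw [e, (polyDeriv _ _ _ _ _ v).deriv]
  ring

/-- auxiliary abbreviations for the decomposition of `eqT` -/
def alE (k a A B C u v : ℝ) : ℝ := k + a/2*u + A/6*u^2 + B/2*u*v + C/2*v^2
def beE (b D v : ℝ) : ℝ := b/2 + D/6*v
def gaE (k b c C D E u v : ℝ) : ℝ := k + b*u + c/2*v + C/2*u^2 + D/2*u*v + E/6*v^2
def huE (k a b A B C D u v : ℝ) : ℝ :=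
  k*u + a/2*u^2 + b/2*v^2 + A/6*u^3 + B/2*u^2*v + C/2*u*v^2 + D/6*v^3
def hvE (k b c B C D E u v : ℝ) : ℝ :=
  k*v + b*u*v + c/2*v^2 + B/6*u^3 + C/2*u^2*v + D/2*u*v^2 + E/6*v^3
def huuE (k a A B C u v : ℝ) : ℝ := k + a*u + A/2*u^2 + B*u*v + C/2*v^2
def huvE (b B C D u v : ℝ) : ℝ := b*v + B/2*u^2 + C*u*v + D/2*v^2
def hvvE (k b c C D E u v : ℝ) : ℝ := k + b*u + c*v + C/2*u^2 + D*u*v + E/2*v^2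

def q1E (k a b c A B C D E u v : ℝ) : ℝ :=
  C - alE k a A B C u v * gaE k b c C D E u v * huuE k a A B C u v
def q2E (k a b c A B C D E u v : ℝ) : ℝ :=
  D/2 + beE b D v * (2*u*alE k a A B C u v + v^2*beE b D v) * huvE b B C D u v
    - v * beE b D v * gaE k b c C D E u v * huuE k a A B C u v
    - B/6*u^3 * beE b D v * huuE k a A B C u v
def mqE (k a b c A B C D E u v : ℝ) : ℝ :=
  c * huE k a b A B C D u v ^ 2
    + (D*u + E/2*v) * (1 + huE k a b A B C D u v ^ 2)
    - (B*u + C/2*v) * (1 + hvE k b c B C D E u v ^ 2)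
    + k * (v * beE b D v * (2*u*alE k a A B C u v + v^2*beE b D v)
        - v * gaE k b c C D E u v ^ 2 - B/3*u^3 * gaE k b c C D E u v)
    + b*u*v * beE b D v * (2*u*alE k a A B C u v + v^2*beE b D v)
    - a*u * (v * gaE k b c C D E u v ^ 2 + B/3*u^3 * gaE k b c C D E u v)
def msE (k a b c A B C D E u v : ℝ) : ℝ :=
  C/2 * (1 + huE k a b A B C D u v ^ 2) - A/2 * (1 + hvE k b c B C D E u v ^ 2)
    + k * (alE k a A B C u v ^ 2 - B^2/36*u^4)
    + b*u * alE k a A B C u v ^ 2 - a*B^2/36*u^5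
def lqE (k a b c A B C D E u v : ℝ) : ℝ :=
  huE k a b A B C D u v * gaE k b c C D E u v * hvvE k b c C D E u v
    - (1 + hvE k b c B C D E u v ^ 2) * (b + C*u + D/2*v)
def lsE (k a b c A B C D E u v : ℝ) : ℝ :=
  B/6*u * huE k a b A B C D u v * hvvE k b c C D E u v
    - B/2 * (1 + hvE k b c B C D E u v ^ 2)
def q3E (k a b c A B C D E u v p : ℝ) : ℝ :=
  c + mqE k a b c A B C D E u v + p * lqE k a b c A B C D E u v
def s1E (k a b c A B C D E u v p : ℝ) : ℝ :=
  alE k a A B C u v ^ 2 * huvE b B C D u v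
    - B/6*u^2 * alE k a A B C u v * huuE k a A B C u v
    + p * msE k a b c A B C D E u v
def s3E (k a b c A B C D E u v : ℝ) : ℝ := u^2 * lsE k a b c A B C D E u v

theorem eqT_decomp (k a b c A B C D E u v p : ℝ) :
    eqT k a b c A B C D E u v p
      = b*v + B/2*u^2 + (b-a)*(u*p)
        + v * (u * q1E k a b c A B C D E u v + v * q2E k a b c A B C D E u v
            + p * q3E k a b c A B C D E u v p)
        + u^2 * s1E k a b c A B C D E u v p + p^2 * s3E k a b c A B C D E u v := by
  rw [eqT, eqL, eqM, eqN, h_u_eq, h_v_eq, h_uu_eq, h_uv_eq, h_vv_eq]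
  unfold q1E q2E q3E s1E s3E mqE msE lqE lsE alE beE gaE huE hvE huuE huvE hvvE
  ring

theorem q1E_cont (k a b c A B C D E : ℝ) :
    Continuous (fun w : ℝ × ℝ × ℝ => q1E k a b c A B C D E w.1 w.2.1) := by
  unfold q1E alE gaE huuE; fun_prop

theorem q2E_cont (k a b c A B C D E : ℝ) :
    Continuous (fun w : ℝ × ℝ × ℝ => q2E k a b c A B C D E w.1 w.2.1) := by
  unfold q2E alE beE gaE huuE huvE; fun_prop

theorem q3E_cont (k a b c A B C D E : ℝ) :
    Continuous (fun w : ℝ × ℝ × ℝ => q3E k a b c A B C D E w.1 w.2.1 w.2.2) := by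
  unfold q3E mqE lqE alE beE gaE huE hvE hvvE; fun_prop

theorem s1E_cont (k a b c A B C D E : ℝ) :
    Continuous (fun w : ℝ × ℝ × ℝ => s1E k a b c A B C D E w.1 w.2.1 w.2.2) := by
  unfold s1E msE alE huvE huuE huE hvE; fun_prop

theorem s3E_cont (k a b c A B C D E : ℝ) :
    Continuous (fun w : ℝ × ℝ × ℝ => s3E k a b c A B C D E w.1 w.2.1) := by
  unfold s3E lsE huE hvE hvvE; fun_prop

/-- values of the remainder coefficients at the origin -/
theorem s1E_zero (k a b c A B C D E : ℝ) : s1E k a b c A B C D E 0 0 0 = 0 := by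
  unfold s1E alE huvE huuE; norm_num

theorem s3E_zero (k a b c A B C D E : ℝ) : s3E k a b c A B C D E 0 0 = 0 := by
  unfold s3E; norm_num

set_option maxHeartbeats 2000000 in
/-- If `b ≠ 0`, the surface `T = 0` is, near the projective line, the graph of a smooth
function `v = v(u,p)` with `v(0,0) = 0`, `T(u, v(u,p), p) = 0`, and
`v(u,p) = −(B/2b)u² + ((a−b)/b)up + o(u² + p²)` as `(u,p) → (0,0)`. -/
theorem stmt_7 (k a b c A B C D E : ℝ) (hb : b ≠ 0) :
    ∃ ε > 0, ∃ v : ℝ × ℝ → ℝ,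
      ContDiffOn ℝ (⊤ : ℕ∞) v (Metric.ball ((0, 0) : ℝ × ℝ) ε) ∧
      v (0, 0) = 0 ∧
      (∀ x ∈ Metric.ball ((0, 0) : ℝ × ℝ) ε, eqT k a b c A B C D E x.1 (v x) x.2 = 0) ∧
      ((fun x : ℝ × ℝ =>
          v x - (-(B / (2 * b)) * x.1 ^ 2 + (a - b) / b * x.1 * x.2))
        =o[𝓝 (0, 0)] fun x : ℝ × ℝ => x.1 ^ 2 + x.2 ^ 2) := by
  classical
  -- the function `G(w) = T(w)` on `ℝ³`
  set G : ℝ × ℝ × ℝ → ℝ := fun w => eqT k a b c A B C D E w.1 w.2.1 w.2.2 with hGdef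
  have hGpoly : ∀ w : ℝ × ℝ × ℝ, G w
      = b*w.2.1 + B/2*w.1^2 + (b-a)*(w.1*w.2.2)
        + w.2.1 * (w.1 * q1E k a b c A B C D E w.1 w.2.1
            + w.2.1 * q2E k a b c A B C D E w.1 w.2.1
            + w.2.2 * q3E k a b c A B C D E w.1 w.2.1 w.2.2)
        + w.1^2 * s1E k a b c A B C D E w.1 w.2.1 w.2.2
        + w.2.2^2 * s3E k a b c A B C D E w.1 w.2.1 := fun w =>
    eqT_decomp k a b c A B C D E w.1 w.2.1 w.2.2
  have hG : ContDiff ℝ (⊤ : ℕ∞) G := by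
    have e : G = fun w : ℝ × ℝ × ℝ =>
        b*w.2.1 + B/2*w.1^2 + (b-a)*(w.1*w.2.2)
        + w.2.1 * (w.1 * q1E k a b c A B C D E w.1 w.2.1
            + w.2.1 * q2E k a b c A B C D E w.1 w.2.1
            + w.2.2 * q3E k a b c A B C D E w.1 w.2.1 w.2.2)
        + w.1^2 * s1E k a b c A B C D E w.1 w.2.1 w.2.2
        + w.2.2^2 * s3E k a b c A B C D E w.1 w.2.1 := funext hGpoly
    rw [e]
    unfold q1E q2E q3E s1E s3E mqE msE lqE lsE alE beE gaE huE hvE huuE huvE hvvE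
    fun_prop
  have hG0 : G (0 : ℝ × ℝ × ℝ) = 0 := by rw [hGpoly 0]; norm_num
  -- derivative of G at 0
  set Lv : (ℝ × ℝ × ℝ) →L[ℝ] ℝ :=
    (ContinuousLinearMap.fst ℝ ℝ ℝ).comp (ContinuousLinearMap.snd ℝ ℝ (ℝ × ℝ)) with hLv
  have term_o : ∀ f g : ℝ × ℝ × ℝ → ℝ, (f =O[𝓝 0] fun w => ‖w‖) →
      Filter.Tendsto g (𝓝 0) (𝓝 0) →
      (fun w => f w * g w) =o[𝓝 0] (fun w : ℝ × ℝ × ℝ => w) := by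
    intro f g hf hg
    have h1 := hf.mul_isLittleO ((isLittleO_one_iff ℝ).2 hg)
    have h2 : (fun w : ℝ × ℝ × ℝ => ‖w‖ * 1) =O[𝓝 0] (fun w : ℝ × ℝ × ℝ => w) := by
      simpa using (isBigO_norm_left (f' := fun w : ℝ × ℝ × ℝ => w)).2
        (isBigO_refl (fun w : ℝ × ℝ × ℝ => w) (𝓝 0))
    exact h1.trans_isBigO h2
  have hco1 : (fun w : ℝ × ℝ × ℝ => w.1) =O[𝓝 0] fun w => ‖w‖ :=
    ((ContinuousLinearMap.fst ℝ ℝ (ℝ × ℝ)).isBigO_id (𝓝 0)).norm_right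
  have hco2 : (fun w : ℝ × ℝ × ℝ => w.2.1) =O[𝓝 0] fun w => ‖w‖ :=
    (Lv.isBigO_id (𝓝 0)).norm_right
  have hco3 : (fun w : ℝ × ℝ × ℝ => w.2.2) =O[𝓝 0] fun w => ‖w‖ :=
    (((ContinuousLinearMap.snd ℝ ℝ ℝ).comp
      (ContinuousLinearMap.snd ℝ ℝ (ℝ × ℝ))).isBigO_id (𝓝 0)).norm_right
  have hDG : HasFDerivAt G (b • Lv) 0 := by
    rw [hasFDerivAt_iff_isLittleO_nhds_zero]
    have e : (fun w : ℝ × ℝ × ℝ => G (0 + w) - G 0 - (b • Lv) w)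
        = fun w : ℝ × ℝ × ℝ =>
          w.1 * (B/2*w.1 + (b-a)*w.2.2 + w.1 * s1E k a b c A B C D E w.1 w.2.1 w.2.2)
          + (w.2.1 * (w.1 * q1E k a b c A B C D E w.1 w.2.1
              + w.2.1 * q2E k a b c A B C D E w.1 w.2.1
              + w.2.2 * q3E k a b c A B C D E w.1 w.2.1 w.2.2)
            + w.2.2 * (w.2.2 * s3E k a b c A B C D E w.1 w.2.1)) := by
      funext w
      rw [zero_add, hGpoly w, hG0]
      simp only [hLv, ContinuousLinearMap.smul_apply, ContinuousLinearMap.coe_comp',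
        Function.comp_apply, ContinuousLinearMap.coe_snd', ContinuousLinearMap.coe_fst',
        smul_eq_mul]
      ring
    rw [e]
    have t1 : Filter.Tendsto (fun w : ℝ × ℝ × ℝ =>
        B/2*w.1 + (b-a)*w.2.2 + w.1 * s1E k a b c A B C D E w.1 w.2.1 w.2.2)
        (𝓝 0) (𝓝 0) := by
      have hc : Continuous (fun w : ℝ × ℝ × ℝ =>
          B/2*w.1 + (b-a)*w.2.2 + w.1 * s1E k a b c A B C D E w.1 w.2.1 w.2.2) := by
        unfold s1E msE alE huvE huuE huE hvE; fun_prop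
      have := hc.tendsto 0
      simpa using this
    have t2 : Filter.Tendsto (fun w : ℝ × ℝ × ℝ =>
        w.1 * q1E k a b c A B C D E w.1 w.2.1
          + w.2.1 * q2E k a b c A B C D E w.1 w.2.1
          + w.2.2 * q3E k a b c A B C D E w.1 w.2.1 w.2.2) (𝓝 0) (𝓝 0) := by
      have hc : Continuous (fun w : ℝ × ℝ × ℝ =>
          w.1 * q1E k a b c A B C D E w.1 w.2.1
          + w.2.1 * q2E k a b c A B C D E w.1 w.2.1
          + w.2.2 * q3E k a b c A B C D E w.1 w.2.1 w.2.2) := by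
        unfold q1E q2E q3E mqE lqE alE beE gaE huE hvE huuE huvE hvvE; fun_prop
      have := hc.tendsto 0
      simpa using this
    have t3 : Filter.Tendsto (fun w : ℝ × ℝ × ℝ =>
        w.2.2 * s3E k a b c A B C D E w.1 w.2.1) (𝓝 0) (𝓝 0) := by
      have hc : Continuous (fun w : ℝ × ℝ × ℝ =>
          w.2.2 * s3E k a b c A B C D E w.1 w.2.1) := by
        unfold s3E lsE huE hvE hvvE; fun_prop
      have := hc.tendsto 0
      simpa using this
    exact (term_o _ _ hco1 t1).add ((term_o _ _ hco2 t2).add (term_o _ _ hco3 t3))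
  -- the map F
  set F : ℝ × ℝ × ℝ → ℝ × ℝ × ℝ := fun w => (w.1, G w, w.2.2) with hFdef
  have hF : ContDiff ℝ (⊤ : ℕ∞) F :=
    contDiff_fst.prodMk (hG.prodMk (contDiff_snd.comp contDiff_snd))
  have hF0 : F 0 = 0 := by
    rw [hFdef]
    simp [hG0]
  set eE : (ℝ × ℝ × ℝ) ≃L[ℝ] (ℝ × ℝ × ℝ) :=
    (ContinuousLinearEquiv.refl ℝ ℝ).prodCongr
      ((ContinuousLinearEquiv.unitsEquivAut ℝ (Units.mk0 b hb)).prodCongr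
        (ContinuousLinearEquiv.refl ℝ ℝ)) with heE
  have hFe : HasFDerivAt F (eE : (ℝ × ℝ × ℝ) →L[ℝ] (ℝ × ℝ × ℝ)) 0 := by
    have h1 : HasFDerivAt (fun w : ℝ × ℝ × ℝ => w.1)
        (ContinuousLinearMap.fst ℝ ℝ (ℝ × ℝ)) 0 :=
      (ContinuousLinearMap.fst ℝ ℝ (ℝ × ℝ)).hasFDerivAt
    have h3 : HasFDerivAt (fun w : ℝ × ℝ × ℝ => w.2.2)
        ((ContinuousLinearMap.snd ℝ ℝ ℝ).comp (ContinuousLinearMap.snd ℝ ℝ (ℝ × ℝ))) 0 :=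
      ((ContinuousLinearMap.snd ℝ ℝ ℝ).comp (ContinuousLinearMap.snd ℝ ℝ (ℝ × ℝ))).hasFDerivAt
    refine (h1.prodMk (hDG.prodMk h3)).congr_fderiv ?_
    ext w <;>
      simp [heE, hLv, ContinuousLinearEquiv.unitsEquivAut, mul_comm]
  have hFc : ContDiffAt ℝ (⊤ : ℕ∞) F 0 := hF.contDiffAt
  set Φ : OpenPartialHomeomorph (ℝ × ℝ × ℝ) (ℝ × ℝ × ℝ) :=
    hFc.toOpenPartialHomeomorph F hFe (by simp) with hΦdef
  have hΦcoe : ⇑Φ = F := ContDiffAt.toOpenPartialHomeomorph_coe hFc hFe (by simp)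
  have hsource : (0 : ℝ × ℝ × ℝ) ∈ Φ.source :=
    ContDiffAt.mem_toOpenPartialHomeomorph_source hFc hFe (by simp)
  have htarget0 : (0 : ℝ × ℝ × ℝ) ∈ Φ.target := by
    have := ContDiffAt.image_mem_toOpenPartialHomeomorph_target hFc hFe (by simp)
    rwa [hF0] at this
  have hsymm0 : Φ.symm 0 = 0 := by
    have h := Φ.left_inv hsource
    have h2 : Φ 0 = (0 : ℝ × ℝ × ℝ) := by rw [hΦcoe, hF0]
    rwa [h2] at h
  -- invertibility of the derivative near 0
  have hfc : Continuous (fderiv ℝ F) := hF.continuous_fderiv (by simp)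
  set U : Set (ℝ × ℝ × ℝ) := {w | IsUnit (fderiv ℝ F w)} with hUdef
  have hUopen : IsOpen U := Units.isOpen.preimage hfc
  have h0U : (0 : ℝ × ℝ × ℝ) ∈ U := by
    have hd : fderiv ℝ F 0 = (eE : (ℝ × ℝ × ℝ) →L[ℝ] (ℝ × ℝ × ℝ)) := hFe.fderiv
    rw [hUdef, Set.mem_setOf_eq, hd]
    exact ⟨⟨(eE : (ℝ × ℝ × ℝ) →L[ℝ] (ℝ × ℝ × ℝ)),
      (eE.symm : (ℝ × ℝ × ℝ) →L[ℝ] (ℝ × ℝ × ℝ)),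
      by ext w <;> simp [ContinuousLinearMap.mul_apply],
      by ext w <;> simp [ContinuousLinearMap.mul_apply]⟩, rfl⟩
  set t : Set (ℝ × ℝ × ℝ) := Φ.target ∩ Φ.symm ⁻¹' (Φ.source ∩ U) with htdef
  have htopen : IsOpen t := Φ.isOpen_inter_preimage_symm (Φ.open_source.inter hUopen)
  have h0t : (0 : ℝ × ℝ × ℝ) ∈ t := by
    refine ⟨htarget0, ?_⟩
    rw [Set.mem_preimage, hsymm0]
    exact ⟨hsource, h0U⟩
  have hsymmCD : ∀ y ∈ t, ContDiffAt ℝ (⊤ : ℕ∞) Φ.symm y := by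
    rintro y ⟨hy1, hy2⟩
    rw [Set.mem_preimage] at hy2
    obtain ⟨-, hx2⟩ := hy2
    obtain ⟨uu, huu⟩ := hx2
    have hdiff : DifferentiableAt ℝ F (Φ.symm y) :=
      (hF.differentiable (by simp)).differentiableAt
    have hd : HasFDerivAt F
        ((ContinuousLinearEquiv.unitsEquiv ℝ (ℝ × ℝ × ℝ) uu :
          (ℝ × ℝ × ℝ) →L[ℝ] (ℝ × ℝ × ℝ))) (Φ.symm y) := by
      have : ((ContinuousLinearEquiv.unitsEquiv ℝ (ℝ × ℝ × ℝ) uu :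
          (ℝ × ℝ × ℝ) →L[ℝ] (ℝ × ℝ × ℝ))) = fderiv ℝ F (Φ.symm y) := by
        rw [← huu]; rfl
      rw [this]
      exact hdiff.hasFDerivAt
    refine Φ.contDiffAt_symm
      (f₀' := ContinuousLinearEquiv.unitsEquiv ℝ (ℝ × ℝ × ℝ) uu) hy1 ?_ ?_
    · rw [hΦcoe]; exact hd
    · rw [hΦcoe]; exact hF.contDiffAt
  -- the implicit function
  set j : ℝ × ℝ → ℝ × ℝ × ℝ := fun x => (x.1, 0, x.2) with hjdef
  have hj : ContDiff ℝ (⊤ : ℕ∞) j := by rw [hjdef]; fun_prop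
  have hj0 : j (0, 0) = 0 := by rw [hjdef]; simp [Prod.ext_iff]
  obtain ⟨ε, hε, hball⟩ : ∃ ε > 0, Metric.ball ((0, 0) : ℝ × ℝ) ε ⊆ j ⁻¹' t := by
    have hmem : j ⁻¹' t ∈ 𝓝 ((0, 0) : ℝ × ℝ) := by
      apply hj.continuous.continuousAt.preimage_mem_nhds
      rw [hj0]
      exact htopen.mem_nhds h0t
    rcases Metric.mem_nhds_iff.1 hmem with ⟨ε, hε, h⟩
    exact ⟨ε, hε, h⟩
  set vf : ℝ × ℝ → ℝ := fun x => (Φ.symm (j x)).2.1 with hvfdef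
  have hvCD : ∀ x ∈ Metric.ball ((0, 0) : ℝ × ℝ) ε, ContDiffAt ℝ (⊤ : ℕ∞) vf x := by
    intro x hx
    have h1 : ContDiffAt ℝ (⊤ : ℕ∞) Φ.symm (j x) := hsymmCD _ (hball hx)
    have h2 : ContDiffAt ℝ (⊤ : ℕ∞) (fun w : ℝ × ℝ × ℝ => w.2.1) (Φ.symm (j x)) := by fun_prop
    exact h2.comp (g := fun w : ℝ × ℝ × ℝ => w.2.1) x (h1.comp x hj.contDiffAt)
  have hctr : ((0, 0) : ℝ × ℝ) ∈ Metric.ball ((0, 0) : ℝ × ℝ) ε := Metric.mem_ball_self hε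
  have hvf0 : vf (0, 0) = 0 := by
    rw [hvfdef]
    simp only [hj0, hsymm0]
    rfl
  -- the equation
  have hw : ∀ x ∈ Metric.ball ((0, 0) : ℝ × ℝ) ε,
      ((x.1, vf x, x.2) : ℝ × ℝ × ℝ) = Φ.symm (j x) := by
    intro x hx
    have hxt := hball hx
    have hFr : F (Φ.symm (j x)) = j x := by
      have := Φ.right_inv hxt.1
      rwa [hΦcoe] at this
    have h1 : (Φ.symm (j x)).1 = x.1 := congrArg Prod.fst hFr
    have h3 : (Φ.symm (j x)).2.2 = x.2 := congrArg (fun z : ℝ × ℝ × ℝ => z.2.2) hFr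
    exact Prod.ext h1.symm (Prod.ext rfl h3.symm)
  have heqn : ∀ x ∈ Metric.ball ((0, 0) : ℝ × ℝ) ε,
      eqT k a b c A B C D E x.1 (vf x) x.2 = 0 := by
    intro x hx
    have hxt := hball hx
    have hFr : F (Φ.symm (j x)) = j x := by
      have := Φ.right_inv hxt.1
      rwa [hΦcoe] at this
    have hGz : G (Φ.symm (j x)) = 0 := congrArg (fun z : ℝ × ℝ × ℝ => z.2.1) hFr
    calc eqT k a b c A B C D E x.1 (vf x) x.2 = G ((x.1, vf x, x.2) : ℝ × ℝ × ℝ) := rfl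
      _ = G (Φ.symm (j x)) := by rw [hw x hx]
      _ = 0 := hGz
  clear_value vf Φ F G eE Lv U t j
  clear hGpoly hG hG0 term_o hco1 hco2 hco3 hDG hF hF0 hFe hFc hΦcoe hsource htarget0
    hsymm0 hfc hUopen h0U htopen h0t hsymmCD hj hj0 hball hw hGdef hLv hFdef heE hΦdef
    hUdef htdef hjdef hvfdef Φ F G eE Lv U t j
  refine ⟨ε, hε, vf, fun x hx => (hvCD x hx).contDiffWithinAt, hvf0, heqn, ?_⟩
  -- asymptotics
  have hvcont : ContinuousAt vf ((0, 0) : ℝ × ℝ) := (hvCD _ hctr).continuousAt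
  have hxu : (fun x : ℝ × ℝ => x.1) =O[𝓝 ((0, 0) : ℝ × ℝ)] fun x => ‖x‖ :=
    ((ContinuousLinearMap.fst ℝ ℝ ℝ).isBigO_id _).norm_right
  have hxp : (fun x : ℝ × ℝ => x.2) =O[𝓝 ((0, 0) : ℝ × ℝ)] fun x => ‖x‖ :=
    ((ContinuousLinearMap.snd ℝ ℝ ℝ).isBigO_id _).norm_right
  have hvO1 : vf =O[𝓝 ((0, 0) : ℝ × ℝ)] fun x => ‖x‖ := by
    have hdiff : DifferentiableAt ℝ vf ((0, 0) : ℝ × ℝ) :=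
      (hvCD _ hctr).differentiableAt (by simp)
    have h := hdiff.hasFDerivAt.isBigO_sub
    rw [hvf0] at h
    have h2 : (fun x : ℝ × ℝ => x - ((0, 0) : ℝ × ℝ)) = fun x : ℝ × ℝ => x := by
      funext x; simp
    rw [h2] at h
    have h3 : (fun x : ℝ × ℝ => vf x - 0) = vf := by funext x; rw [sub_zero]
    rw [h3] at h
    exact h.norm_right
  -- continuity of the coefficient functions composed with `vf`
  have hWc : ContinuousAt (fun x : ℝ × ℝ => ((x.1, vf x, x.2) : ℝ × ℝ × ℝ)) ((0, 0) : ℝ × ℝ) :=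
    continuousAt_fst.prodMk (hvcont.prodMk continuousAt_snd)
  have hWt : Filter.Tendsto (fun x : ℝ × ℝ => ((x.1, vf x, x.2) : ℝ × ℝ × ℝ))
      (𝓝 ((0, 0) : ℝ × ℝ)) (𝓝 (0 : ℝ × ℝ × ℝ)) := by
    have h := hWc.tendsto
    have h0 : (((((0, 0) : ℝ × ℝ)).1, vf ((0, 0) : ℝ × ℝ), (((0, 0) : ℝ × ℝ)).2) : ℝ × ℝ × ℝ)
        = (0 : ℝ × ℝ × ℝ) := by rw [hvf0]; rfl
    rw [h0] at h
    exact h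
  have hq1O : (fun x : ℝ × ℝ => q1E k a b c A B C D E x.1 (vf x))
      =O[𝓝 ((0, 0) : ℝ × ℝ)] (fun _ => (1 : ℝ)) := by
    have hc := q1E_cont k a b c A B C D E
    exact ((hc.tendsto 0).comp hWt).isBigO_one ℝ
  have hq2O : (fun x : ℝ × ℝ => q2E k a b c A B C D E x.1 (vf x))
      =O[𝓝 ((0, 0) : ℝ × ℝ)] (fun _ => (1 : ℝ)) := by
    have hc := q2E_cont k a b c A B C D E
    exact ((hc.tendsto 0).comp hWt).isBigO_one ℝ
  have hq3O : (fun x : ℝ × ℝ => q3E k a b c A B C D E x.1 (vf x) x.2)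
      =O[𝓝 ((0, 0) : ℝ × ℝ)] (fun _ => (1 : ℝ)) := by
    have hc := q3E_cont k a b c A B C D E
    exact ((hc.tendsto 0).comp hWt).isBigO_one ℝ
  have hS1t : Filter.Tendsto (fun x : ℝ × ℝ => s1E k a b c A B C D E x.1 (vf x) x.2)
      (𝓝 ((0, 0) : ℝ × ℝ)) (𝓝 0) := by
    have hc := s1E_cont k a b c A B C D E
    have h := (hc.tendsto 0).comp hWt
    simp only [Prod.fst_zero, Prod.snd_zero] at h
    rw [s1E_zero k a b c A B C D E] at h
    exact h
  have hS3t : Filter.Tendsto (fun x : ℝ × ℝ => s3E k a b c A B C D E x.1 (vf x))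
      (𝓝 ((0, 0) : ℝ × ℝ)) (𝓝 0) := by
    have hc := s3E_cont k a b c A B C D E
    have h := (hc.tendsto 0).comp hWt
    simp only [Prod.fst_zero, Prod.snd_zero] at h
    rw [s3E_zero k a b c A B C D E] at h
    exact h
  -- the big-O estimate for the `Q`-part
  have hmulO : ∀ f g : ℝ × ℝ → ℝ, (f =O[𝓝 ((0, 0) : ℝ × ℝ)] fun x => ‖x‖) →
      (g =O[𝓝 ((0, 0) : ℝ × ℝ)] (fun _ => (1 : ℝ))) →
      (fun x => f x * g x) =O[𝓝 ((0, 0) : ℝ × ℝ)] fun x => ‖x‖ := by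
    intro f g hf hg
    simpa using hf.mul hg
  have hQO : (fun x : ℝ × ℝ => x.1 * q1E k a b c A B C D E x.1 (vf x)
      + vf x * q2E k a b c A B C D E x.1 (vf x)
      + x.2 * q3E k a b c A B C D E x.1 (vf x) x.2)
      =O[𝓝 ((0, 0) : ℝ × ℝ)] fun x => ‖x‖ :=
    ((hmulO _ _ hxu hq1O).add (hmulO _ _ hvO1 hq2O)).add (hmulO _ _ hxp hq3O)
  -- the identity satisfied by `vf`
  have hid : ∀ x ∈ Metric.ball ((0, 0) : ℝ × ℝ) ε, b * vf x
      = -(B/2 * x.1^2) - (b-a)*(x.1*x.2)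
        - vf x * (x.1 * q1E k a b c A B C D E x.1 (vf x)
            + vf x * q2E k a b c A B C D E x.1 (vf x)
            + x.2 * q3E k a b c A B C D E x.1 (vf x) x.2)
        - x.1^2 * s1E k a b c A B C D E x.1 (vf x) x.2
        - x.2^2 * s3E k a b c A B C D E x.1 (vf x) := by
    intro x hx
    have h0 := heqn x hx
    rw [eqT_decomp] at h0
    linarith
  have hx2 : (fun x : ℝ × ℝ => x.1^2) =O[𝓝 ((0, 0) : ℝ × ℝ)] fun x => ‖x‖^2 := by
    have := hxu.mul hxu
    simpa [pow_two] using this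
  have hp2 : (fun x : ℝ × ℝ => x.2^2) =O[𝓝 ((0, 0) : ℝ × ℝ)] fun x => ‖x‖^2 := by
    have := hxp.mul hxp
    simpa [pow_two] using this
  have hup : (fun x : ℝ × ℝ => x.1*x.2) =O[𝓝 ((0, 0) : ℝ × ℝ)] fun x => ‖x‖^2 := by
    have := hxu.mul hxp
    simpa [pow_two] using this
  have hm2 : ∀ f g : ℝ × ℝ → ℝ, (f =O[𝓝 ((0, 0) : ℝ × ℝ)] fun x => ‖x‖^2) →
      (g =O[𝓝 ((0, 0) : ℝ × ℝ)] (fun _ => (1 : ℝ))) →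
      (fun x => f x * g x) =O[𝓝 ((0, 0) : ℝ × ℝ)] fun x => ‖x‖^2 := by
    intro f g hf hg
    simpa using hf.mul hg
  -- bootstrap: `vf = O(‖x‖²)`
  have hvO2 : vf =O[𝓝 ((0, 0) : ℝ × ℝ)] fun x => ‖x‖^2 := by
    rw [← isBigO_const_mul_left_iff hb]
    have hRHS : (fun x : ℝ × ℝ => -(B/2 * x.1^2) - (b-a)*(x.1*x.2)
        - vf x * (x.1 * q1E k a b c A B C D E x.1 (vf x)
            + vf x * q2E k a b c A B C D E x.1 (vf x)
            + x.2 * q3E k a b c A B C D E x.1 (vf x) x.2)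
        - x.1^2 * s1E k a b c A B C D E x.1 (vf x) x.2
        - x.2^2 * s3E k a b c A B C D E x.1 (vf x))
        =O[𝓝 ((0, 0) : ℝ × ℝ)] fun x => ‖x‖^2 := by
      have t1 : (fun x : ℝ × ℝ => -(B/2 * x.1^2)) =O[𝓝 ((0, 0) : ℝ × ℝ)]
          fun x => ‖x‖^2 := by
        simpa [neg_mul, mul_assoc] using (hx2.const_mul_left (B/2)).neg_left
      have t2 := hup.const_mul_left (b-a)
      have t3 : (fun x : ℝ × ℝ => vf x * (x.1 * q1E k a b c A B C D E x.1 (vf x)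
          + vf x * q2E k a b c A B C D E x.1 (vf x)
          + x.2 * q3E k a b c A B C D E x.1 (vf x) x.2))
          =O[𝓝 ((0, 0) : ℝ × ℝ)] fun x => ‖x‖^2 := by
        have := hvO1.mul hQO
        simpa [pow_two] using this
      have t4 := hm2 _ _ hx2 (hS1t.isBigO_one ℝ)
      have t5 := hm2 _ _ hp2 (hS3t.isBigO_one ℝ)
      exact (((t1.sub t2).sub t3).sub t4).sub t5
    refine hRHS.congr' ?_ Filter.EventuallyEq.rfl
    exact Filter.eventually_of_mem (Metric.ball_mem_nhds _ hε) fun x hx => (hid x hx).symm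
  -- little-o estimates
  have hnt : Filter.Tendsto (fun x : ℝ × ℝ => ‖x‖) (𝓝 ((0, 0) : ℝ × ℝ)) (𝓝 0) :=
    tendsto_norm_zero
  have hcube : (fun x : ℝ × ℝ => ‖x‖^2 * ‖x‖) =o[𝓝 ((0, 0) : ℝ × ℝ)] fun x => ‖x‖^2 := by
    have := (isBigO_refl (fun x : ℝ × ℝ => ‖x‖^2)
      (𝓝 ((0, 0) : ℝ × ℝ))).mul_isLittleO ((isLittleO_one_iff ℝ).2 hnt)
    simpa using this
  have o1 : (fun x : ℝ × ℝ => vf x * (x.1 * q1E k a b c A B C D E x.1 (vf x)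
      + vf x * q2E k a b c A B C D E x.1 (vf x)
      + x.2 * q3E k a b c A B C D E x.1 (vf x) x.2))
      =o[𝓝 ((0, 0) : ℝ × ℝ)] fun x => ‖x‖^2 :=
    (hvO2.mul hQO).trans_isLittleO hcube
  have o2 : (fun x : ℝ × ℝ => x.1^2 * s1E k a b c A B C D E x.1 (vf x) x.2)
      =o[𝓝 ((0, 0) : ℝ × ℝ)] fun x => ‖x‖^2 := by
    have := hx2.mul_isLittleO ((isLittleO_one_iff ℝ).2 hS1t)
    simpa using this
  have o3 : (fun x : ℝ × ℝ => x.2^2 * s3E k a b c A B C D E x.1 (vf x))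
      =o[𝓝 ((0, 0) : ℝ × ℝ)] fun x => ‖x‖^2 := by
    have := hp2.mul_isLittleO ((isLittleO_one_iff ℝ).2 hS3t)
    simpa using this
  have hn2 : (fun x : ℝ × ℝ => ‖x‖^2) =O[𝓝 ((0, 0) : ℝ × ℝ)]
      fun x => x.1^2 + x.2^2 := by
    refine IsBigO.of_bound 1 (Filter.Eventually.of_forall fun x => ?_)
    have h1 : ‖x‖ = max |x.1| |x.2| := by
      rw [Prod.norm_def, Real.norm_eq_abs, Real.norm_eq_abs]
    have h2 : (0:ℝ) ≤ x.1^2 + x.2^2 := by positivity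
    rw [Real.norm_eq_abs, Real.norm_eq_abs, one_mul, abs_of_nonneg (by positivity),
      abs_of_nonneg h2, h1]
    rcases max_cases |x.1| |x.2| with ⟨h3, -⟩ | ⟨h3, -⟩ <;> rw [h3] <;>
      nlinarith [sq_abs x.1, sq_abs x.2, sq_nonneg x.1, sq_nonneg x.2]
  have hsum : (fun x : ℝ × ℝ => vf x * (x.1 * q1E k a b c A B C D E x.1 (vf x)
      + vf x * q2E k a b c A B C D E x.1 (vf x)
      + x.2 * q3E k a b c A B C D E x.1 (vf x) x.2)
      + x.1^2 * s1E k a b c A B C D E x.1 (vf x) x.2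
      + x.2^2 * s3E k a b c A B C D E x.1 (vf x))
      =o[𝓝 ((0, 0) : ℝ × ℝ)] fun x => x.1^2 + x.2^2 :=
    ((o1.add o2).add o3).trans_isBigO hn2
  have hev : (fun x : ℝ × ℝ => vf x - (-(B / (2 * b)) * x.1 ^ 2 + (a - b) / b * x.1 * x.2))
      =ᶠ[𝓝 ((0, 0) : ℝ × ℝ)] fun x : ℝ × ℝ => (-(1/b)) *
        (vf x * (x.1 * q1E k a b c A B C D E x.1 (vf x)
          + vf x * q2E k a b c A B C D E x.1 (vf x)
          + x.2 * q3E k a b c A B C D E x.1 (vf x) x.2)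
        + x.1^2 * s1E k a b c A B C D E x.1 (vf x) x.2
        + x.2^2 * s3E k a b c A B C D E x.1 (vf x)) := by
    refine Filter.eventually_of_mem (Metric.ball_mem_nhds _ hε) fun x hx => ?_
    have h := hid x hx
    have hc1 : b * (-(B/(2*b))) = -(B/2) := by field_simp
    have hc2 : b * ((a-b)/b) = a - b := by field_simp
    have hc3 : b * (1/b) = 1 := by field_simp
    refine mul_left_cancel₀ hb ?_
    linear_combination h - x.1^2 * hc1 - (x.1*x.2) * hc2
      + (vf x * (x.1 * q1E k a b c A B C D E x.1 (vf x)
          + vf x * q2E k a b c A B C D E x.1 (vf x)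
          + x.2 * q3E k a b c A B C D E x.1 (vf x) x.2)
        + x.1^2 * s1E k a b c A B C D E x.1 (vf x) x.2
        + x.2^2 * s3E k a b c A B C D E x.1 (vf x)) * hc3
  exact ((hsum.const_mul_left (-(1/b))).congr' hev.symm Filter.EventuallyEq.rfl)
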